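/- arXiv:2402.03815 — 3 statements merged into one kernel-verified Lean document; each statement's English description precedes it below -/
import Mathlib

section
/- Let (Ω, P) be a probability space, d ≥ 1 a natural number, α < 0, φ > 0, f > 0 real numbers, and for each l ∈ {1, …, d} set u_l = f·φ·l^α. Suppose for each l there are random variables B_l : Ω → ℝ taking values in {0, 1} with E[B_l] = r_l, and square-integrable θ_l : Ω → ℝ independent of B_l with E[(θ_l − u_l)²] ≤ 1/4. Then the total expected compression error satisfies E[Σ_{l=1}^d (B_l·θ_l − u_l)²] ≤ γ · Σ_{l=1}^d u_l², where γ = 1 − (Σ_{l=1}^d r_l·l^{2α})/(Σ_{l=1}^d l^{2α}) + (1/(4·f²·φ²))·(Σ_{l=1}^d r_l)/(Σ_{l=1}^d l^{2α}). -/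
open MeasureTheory ProbabilityTheory

/-!
Write `Bθ - u = B(θ - u) - (1 - B)u`. Since `B ∈ {0, 1}` the cross term vanishes, so
`(Bθ - u)² = B(θ - u)² + (1 - B)u²`, and independence of `B` and `θ` gives the exact
per-coordinate error `r·E(θ - u)² + (1 - r)u² ≤ r/4 + (1 - r)u²`. Summing over the coordinates
and substituting `u_l² = f²φ²·l^{2α}` turns this into `γ · Σ u_l²`.
-/

lemma sq_mul_sub_eq_of_eq_zero_or_eq_one {b x u : ℝ} (hb : b = 0 ∨ b = 1) :
    (b * x - u) ^ 2 = b * (x - u) ^ 2 + (1 - b) * u ^ 2 := by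
  rcases hb with rfl | rfl <;> ring

lemma norm_le_one_of_eq_zero_or_eq_one {b : ℝ} (hb : b = 0 ∨ b = 1) : ‖b‖ ≤ 1 := by
  rcases hb with rfl | rfl <;> simp

section MaskedQuantization

variable {Ω : Type*} [MeasurableSpace Ω] {P : Measure Ω} [IsProbabilityMeasure P]
  {B θ : Ω → ℝ}

lemma integrable_of_eq_zero_or_eq_one (hB : Measurable B) (hB01 : ∀ ω, B ω = 0 ∨ B ω = 1) :
    Integrable B P :=
  .of_bound hB.aestronglyMeasurable 1
    (.of_forall fun ω ↦ norm_le_one_of_eq_zero_or_eq_one (hB01 ω))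

lemma integrable_mul_sq_sub (hB : Measurable B) (hB01 : ∀ ω, B ω = 0 ∨ B ω = 1)
    (hθ : MemLp θ 2 P) (u : ℝ) :
    Integrable (fun ω ↦ B ω * (θ ω - u) ^ 2) P :=
  ((hθ.sub (memLp_const u)).integrable_sq).bdd_mul hB.aestronglyMeasurable
    (.of_forall fun ω ↦ norm_le_one_of_eq_zero_or_eq_one (hB01 ω))

lemma integrable_one_sub_mul_sq (hB : Measurable B) (hB01 : ∀ ω, B ω = 0 ∨ B ω = 1) (u : ℝ) :
    Integrable (fun ω ↦ (1 - B ω) * u ^ 2) P :=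
  ((integrable_const 1).sub (integrable_of_eq_zero_or_eq_one hB hB01)).mul_const _

lemma integrable_sq_mul_sub (hB : Measurable B) (hB01 : ∀ ω, B ω = 0 ∨ B ω = 1)
    (hθ : MemLp θ 2 P) (u : ℝ) :
    Integrable (fun ω ↦ (B ω * θ ω - u) ^ 2) P := by
  simp_rw [sq_mul_sub_eq_of_eq_zero_or_eq_one (hB01 _)]
  exact (integrable_mul_sq_sub hB hB01 hθ u).add (integrable_one_sub_mul_sq hB hB01 u)

lemma integral_sq_mul_sub (hB : Measurable B) (hB01 : ∀ ω, B ω = 0 ∨ B ω = 1)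
    (hθ : MemLp θ 2 P) (hindep : IndepFun θ B P) (u : ℝ) :
    ∫ ω, (B ω * θ ω - u) ^ 2 ∂P =
      (∫ ω, B ω ∂P) * ∫ ω, (θ ω - u) ^ 2 ∂P + (1 - ∫ ω, B ω ∂P) * u ^ 2 := by
  have hindep_sq : IndepFun (fun ω ↦ (θ ω - u) ^ 2) B P :=
    hindep.comp (by fun_prop : Measurable fun x : ℝ ↦ (x - u) ^ 2) measurable_id
  have h_mask : ∫ ω, B ω * (θ ω - u) ^ 2 ∂P = (∫ ω, B ω ∂P) * ∫ ω, (θ ω - u) ^ 2 ∂P := by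
    rw [mul_comm]
    simp_rw [mul_comm (B _)]
    exact hindep_sq.integral_mul_eq_mul_integral
      (hθ.sub (memLp_const u)).integrable_sq.aestronglyMeasurable hB.aestronglyMeasurable
  simp_rw [sq_mul_sub_eq_of_eq_zero_or_eq_one (hB01 _)]
  rw [integral_add (integrable_mul_sq_sub hB hB01 hθ u) (integrable_one_sub_mul_sq hB hB01 u),
    h_mask, integral_mul_const,
    integral_sub (integrable_const 1) (integrable_of_eq_zero_or_eq_one hB hB01)]
  simp

lemma integral_sq_mul_sub_le {q : ℝ} (hB : Measurable B) (hB01 : ∀ ω, B ω = 0 ∨ B ω = 1)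
    (hθ : MemLp θ 2 P) (hindep : IndepFun θ B P) (u : ℝ) (hq : ∫ ω, (θ ω - u) ^ 2 ∂P ≤ q) :
    ∫ ω, (B ω * θ ω - u) ^ 2 ∂P ≤ (∫ ω, B ω ∂P) * q + (1 - ∫ ω, B ω ∂P) * u ^ 2 := by
  have hr : 0 ≤ ∫ ω, B ω ∂P :=
    integral_nonneg fun ω ↦ by rcases hB01 ω with h | h <;> simp [h]
  rw [integral_sq_mul_sub hB hB01 hθ hindep u]
  gcongr

end MaskedQuantization

lemma sq_mul_rpow {c x : ℝ} (hx : 0 ≤ x) (α : ℝ) : (c * x ^ α) ^ 2 = c ^ 2 * x ^ (2 * α) := by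
  rw [mul_pow, ← Real.rpow_natCast (x ^ α), ← Real.rpow_mul hx, Nat.cast_ofNat, mul_comm α]

lemma sum_mask_error_eq {ι : Type*} (s : Finset ι) (r w : ι → ℝ) {k : ℝ} (hk : k ≠ 0)
    (hw : ∑ i ∈ s, w i ≠ 0) :
    ∑ i ∈ s, (r i * (1 / 4) + (1 - r i) * (k * w i)) =
      (1 - (∑ i ∈ s, r i * w i) / (∑ i ∈ s, w i) + 1 / (4 * k) * (∑ i ∈ s, r i) / (∑ i ∈ s, w i))
        * ∑ i ∈ s, k * w i := by
  have hsplit : ∀ i ∈ s,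
      r i * (1 / 4) + (1 - r i) * (k * w i) = r i / 4 + k * w i - k * (r i * w i) :=
    fun i _ ↦ by ring
  rw [Finset.sum_congr rfl hsplit, Finset.sum_sub_distrib, Finset.sum_add_distrib,
    ← Finset.sum_div, ← Finset.mul_sum, ← Finset.mul_sum]
  field_simp
  ring

theorem fediac_compression_error_bound_general
    {Ω : Type*} [MeasurableSpace Ω] (P : Measure Ω) [IsProbabilityMeasure P]
    (d : ℕ) (hd : 1 ≤ d) (α φ f : ℝ) (hφ : 0 < φ) (hf : 0 < f)
    (u r : ℕ → ℝ) (B θ : ℕ → Ω → ℝ)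
    (hu : ∀ l ∈ Finset.Icc 1 d, u l = f * φ * (l : ℝ) ^ α)
    (hBmeas : ∀ l ∈ Finset.Icc 1 d, Measurable (B l))
    (hB01 : ∀ l ∈ Finset.Icc 1 d, ∀ ω, B l ω = 0 ∨ B l ω = 1)
    (hBmean : ∀ l ∈ Finset.Icc 1 d, ∫ ω, B l ω ∂P = r l)
    (hθ : ∀ l ∈ Finset.Icc 1 d, MemLp (θ l) 2 P)
    (hindep : ∀ l ∈ Finset.Icc 1 d, IndepFun (θ l) (B l) P)
    (hqerr : ∀ l ∈ Finset.Icc 1 d, ∫ ω, (θ l ω - u l) ^ 2 ∂P ≤ 1 / 4) :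
    ∫ ω, (∑ l ∈ Finset.Icc 1 d, (B l ω * θ l ω - u l) ^ 2) ∂P ≤
      (1 - (∑ l ∈ Finset.Icc 1 d, r l * (l : ℝ) ^ (2 * α)) /
            (∑ l ∈ Finset.Icc 1 d, (l : ℝ) ^ (2 * α))
        + (1 / (4 * f ^ 2 * φ ^ 2)) * (∑ l ∈ Finset.Icc 1 d, r l) /
            (∑ l ∈ Finset.Icc 1 d, (l : ℝ) ^ (2 * α)))
      * ∑ l ∈ Finset.Icc 1 d, (u l) ^ 2 := by
  have hu_sq : ∀ l ∈ Finset.Icc 1 d, u l ^ 2 = (f * φ) ^ 2 * (l : ℝ) ^ (2 * α) := fun l hl ↦ by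
    rw [hu l hl, sq_mul_rpow l.cast_nonneg]
  have hw_pos : 0 < ∑ l ∈ Finset.Icc 1 d, (l : ℝ) ^ (2 * α) :=
    Finset.sum_pos (fun l hl ↦ by have := (Finset.mem_Icc.mp hl).1; positivity)
      ⟨1, Finset.mem_Icc.mpr ⟨le_rfl, hd⟩⟩
  calc ∫ ω, (∑ l ∈ Finset.Icc 1 d, (B l ω * θ l ω - u l) ^ 2) ∂P
      = ∑ l ∈ Finset.Icc 1 d, ∫ ω, (B l ω * θ l ω - u l) ^ 2 ∂P :=
        integral_finsetSum _ fun l hl ↦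
          integrable_sq_mul_sub (hBmeas l hl) (hB01 l hl) (hθ l hl) _
    _ ≤ ∑ l ∈ Finset.Icc 1 d, (r l * (1 / 4) + (1 - r l) * u l ^ 2) :=
        Finset.sum_le_sum fun l hl ↦ hBmean l hl ▸
          integral_sq_mul_sub_le (hBmeas l hl) (hB01 l hl) (hθ l hl) (hindep l hl) _ (hqerr l hl)
    _ = _ := by
        rw [Finset.sum_congr rfl fun l hl ↦ by rw [hu_sq l hl], Finset.sum_congr rfl hu_sq,
          sum_mask_error_eq _ _ _ (by positivity) hw_pos.ne', mul_pow, mul_assoc 4]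

/-- Proposition 1 of the paper: under the power-law magnitude model `u l = f·φ·l^α`,
with coordinate `l` kept with probability `r l` (indicator `B l`) and, if kept, transmitted
as a quantization `θ l` with per-coordinate mean squared quantization error at most `1/4`,
the total expected compression error is bounded by `γ · Σ u_l²` where
`γ = 1 − (Σ r_l·l^{2α})/(Σ l^{2α}) + (1/(4·f²·φ²))·(Σ r_l)/(Σ l^{2α})`. -/
theorem fediac_compression_error_bound
    {Ω : Type*} [MeasurableSpace Ω] (P : Measure Ω) [IsProbabilityMeasure P]
    (d : ℕ) (hd : 1 ≤ d) (α φ f : ℝ) (hα : α < 0) (hφ : 0 < φ) (hf : 0 < f)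
    (u r : ℕ → ℝ) (B θ : ℕ → Ω → ℝ)
    (hu : ∀ l ∈ Finset.Icc 1 d, u l = f * φ * (l : ℝ) ^ α)
    (hBmeas : ∀ l ∈ Finset.Icc 1 d, Measurable (B l))
    (hB01 : ∀ l ∈ Finset.Icc 1 d, ∀ ω, B l ω = 0 ∨ B l ω = 1)
    (hBmean : ∀ l ∈ Finset.Icc 1 d, ∫ ω, B l ω ∂P = r l)
    (hθ : ∀ l ∈ Finset.Icc 1 d, MemLp (θ l) 2 P)
    (hindep : ∀ l ∈ Finset.Icc 1 d, IndepFun (θ l) (B l) P)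
    (hqerr : ∀ l ∈ Finset.Icc 1 d, ∫ ω, (θ l ω - u l) ^ 2 ∂P ≤ 1 / 4) :
    ∫ ω, (∑ l ∈ Finset.Icc 1 d, (B l ω * θ l ω - u l) ^ 2) ∂P ≤
      (1 - (∑ l ∈ Finset.Icc 1 d, r l * (l : ℝ) ^ (2 * α)) /
            (∑ l ∈ Finset.Icc 1 d, (l : ℝ) ^ (2 * α))
        + (1 / (4 * f ^ 2 * φ ^ 2)) * (∑ l ∈ Finset.Icc 1 d, r l) /
            (∑ l ∈ Finset.Icc 1 d, (l : ℝ) ^ (2 * α)))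
      * ∑ l ∈ Finset.Icc 1 d, (u l) ^ 2 :=
  fediac_compression_error_bound_general P d hd α φ f hφ hf u r B θ hu hBmeas hB01 hBmean hθ hindep
    hqerr
end

section
/- Let d ≥ 1 be a natural number, α < 0, φ > 0, m > 0 real numbers, N ≥ 1 a natural number, and r_1, …, r_d ∈ [0, 1] with Σ_{l=1}^d r_l·l^{2α} > 0. Let b be a real number with b > log₂( (√(Σ_{l=1}^d r_l) / (2·φ·√(Σ_{l=1}^d r_l·l^{2α})))·N·m + N ) + 1, and set f = (2^{b−1} − N)/(N·m). Then f > 0 and γ < 1, where γ = 1 − (Σ_{l=1}^d r_l·l^{2α})/(Σ_{l=1}^d l^{2α}) + (1/(4·f²·φ²))·(Σ_{l=1}^d r_l)/(Σ_{l=1}^d l^{2α}). -/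
/-- Corollary of Proposition 1: if the number of quantization bits `b` satisfies
`b > log₂( (√(Σ r_l)/(2·φ·√(Σ r_l·l^{2α})))·N·m + N ) + 1` and `f = (2^{b−1} − N)/(N·m)`,
then `f > 0` and the compression error coefficient `γ` of FediAC is below `1`. -/
theorem fediac_bits_lower_bound
    (d : ℕ) (hd : 1 ≤ d) (α φ m : ℝ) (hα : α < 0) (hφ : 0 < φ) (hm : 0 < m)
    (N : ℕ) (hN : 1 ≤ N)
    (r : ℕ → ℝ) (hr : ∀ l ∈ Finset.Icc 1 d, 0 ≤ r l ∧ r l ≤ 1)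
    (hrpos : 0 < ∑ l ∈ Finset.Icc 1 d, r l * (l : ℝ) ^ (2 * α))
    (b : ℝ)
    (hb : b > Real.logb 2
        ((Real.sqrt (∑ l ∈ Finset.Icc 1 d, r l) /
            (2 * φ * Real.sqrt (∑ l ∈ Finset.Icc 1 d, r l * (l : ℝ) ^ (2 * α))))
          * N * m + N) + 1)
    (f : ℝ) (hf : f = ((2 : ℝ) ^ (b - 1) - N) / (N * m)) :
    0 < f ∧
    (1 - (∑ l ∈ Finset.Icc 1 d, r l * (l : ℝ) ^ (2 * α)) /
          (∑ l ∈ Finset.Icc 1 d, (l : ℝ) ^ (2 * α))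
      + (1 / (4 * f ^ 2 * φ ^ 2)) * (∑ l ∈ Finset.Icc 1 d, r l) /
          (∑ l ∈ Finset.Icc 1 d, (l : ℝ) ^ (2 * α))) < 1 := by
  set R := ∑ l ∈ Finset.Icc 1 d, r l with hRdef
  set S := ∑ l ∈ Finset.Icc 1 d, r l * (l : ℝ) ^ (2 * α) with hSdef
  set T := ∑ l ∈ Finset.Icc 1 d, (l : ℝ) ^ (2 * α) with hTdef
  have hne : (Finset.Icc 1 d).Nonempty := ⟨1, by simp [hd]⟩
  have hSR : S ≤ R := by
    apply Finset.sum_le_sum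
    intro l hl
    have h1 : (1:ℝ) ≤ (l:ℝ) := by exact_mod_cast (Finset.mem_Icc.mp hl).1
    have hle1 : (l:ℝ) ^ (2*α) ≤ 1 :=
      Real.rpow_le_one_of_one_le_of_nonpos h1 (by nlinarith)
    have h0 : 0 ≤ (l:ℝ) ^ (2*α) := Real.rpow_nonneg (by linarith) _
    nlinarith [(hr l hl).1]
  have hRpos : 0 < R := lt_of_lt_of_le hrpos hSR
  have hTpos : 0 < T := by
    apply Finset.sum_pos _ hne
    intro l hl
    have h1 : (1:ℝ) ≤ (l:ℝ) := by exact_mod_cast (Finset.mem_Icc.mp hl).1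
    exact Real.rpow_pos_of_pos (by linarith) _
  set C := Real.sqrt R / (2 * φ * Real.sqrt S) with hCdef
  have hCpos : 0 < C := by
    apply div_pos (Real.sqrt_pos.mpr hRpos)
    positivity
  have hNm : 0 < (N:ℝ) * m := by
    have : (1:ℝ) ≤ N := by exact_mod_cast hN
    positivity
  have hXpos : 0 < C * N * m + N := by
    have : (1:ℝ) ≤ N := by exact_mod_cast hN
    nlinarith
  have h2 : C * N * m + N < (2:ℝ) ^ (b - 1) := by
    have hlt : Real.logb 2 (C * N * m + N) < b - 1 := by linarith
    calc C * N * m + N = (2:ℝ) ^ Real.logb 2 (C * N * m + N) :=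
          (Real.rpow_logb two_pos (by norm_num) hXpos).symm
      _ < (2:ℝ) ^ (b - 1) :=
          (Real.rpow_lt_rpow_left_iff one_lt_two).mpr hlt
  have hfC : C < f := by
    rw [hf, lt_div_iff₀ hNm]
    nlinarith
  have hfpos : 0 < f := lt_trans hCpos hfC
  refine ⟨hfpos, ?_⟩
  have hC2 : C ^ 2 = R / (4 * φ ^ 2 * S) := by
    rw [hCdef, div_pow, mul_pow, mul_pow, Real.sq_sqrt hRpos.le, Real.sq_sqrt hrpos.le]
    ring
  have hCf2 : C ^ 2 < f ^ 2 := by nlinarith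
  have key : (1 / (4 * f ^ 2 * φ ^ 2)) * R < S := by
    have h1 : R < f ^ 2 * (4 * φ ^ 2 * S) := by
      rw [hC2] at hCf2
      exact (div_lt_iff₀ (by positivity)).mp hCf2
    have hx : 0 < 4 * f ^ 2 * φ ^ 2 := by positivity
    rw [one_div, inv_mul_eq_div, div_lt_iff₀ hx]
    nlinarith
  have hdiv : (1 / (4 * f ^ 2 * φ ^ 2)) * R / T < S / T :=
    (div_lt_div_iff_of_pos_right hTpos).mpr key
  linarith
end

section
/- Let d ≥ 1, k ≥ 1, N ≥ 1 and 1 ≤ a ≤ N be natural numbers and α < 0 a real number. For l ∈ {1, …, d}, define p_l = l^α / Σ_{j=1}^{d} j^α, q_l = 1 − (1 − p_l)^k, and r_l = Σ_{j=a}^{N} C(N, j)·(q_l)^j·(1 − q_l)^{N−j}. Then for all 1 ≤ l ≤ l' ≤ d, r_l ≥ r_{l'}; that is, model updates of larger magnitude rank are at least as likely to be included in the global index array. -/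
/-!
Every stage of the voting pipeline is monotone. Since `α < 0`, the power-law weight
`l ^ α / ∑ j ^ α` decreases in `l`; the map `x ↦ 1 - (1 - x) ^ k` is increasing on `[0, 1]` and
preserves it; and the binomial upper tail `∑_{j ≥ a} C(N, j) x ^ j (1 - x) ^ (N - j)` is a sum of
Bernstein polynomials `b_{N,j}`, whose derivative telescopes, by
`b_{n+1,ν+1}' = (n + 1) (b_{n,ν} - b_{n,ν+1})`, to `(n + 1) b_{n,a-1} ≥ 0` on `[0, 1]`.
-/

open Finset Polynomial

theorem derivative_sum_bernsteinPolynomial_Icc (R : Type*) [CommRing R] (n a : ℕ) :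
    derivative (∑ ν ∈ Icc (a + 1) (n + 1), bernsteinPolynomial R (n + 1) ν) =
      (n + 1) * bernsteinPolynomial R n a := by
  rw [← map_add_right_Icc a n 1, sum_map, derivative_sum]
  simp only [addRightEmbedding_apply, bernsteinPolynomial.derivative_succ, Nat.add_sub_cancel,
    Nat.cast_succ, ← mul_sum]
  congr 1
  rcases le_or_gt a n with han | hna
  · have h := sum_Icc_sub han (bernsteinPolynomial R n)
    rw [bernsteinPolynomial.eq_zero_of_lt R n.lt_succ_self] at h
    rw [sum_sub_distrib] at h ⊢
    linear_combination -h
  · rw [Icc_eq_empty hna.not_ge, sum_empty, bernsteinPolynomial.eq_zero_of_lt R hna]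

theorem eval_bernsteinPolynomial_nonneg {n ν : ℕ} {x : ℝ} (hx : x ∈ Set.Icc 0 1) :
    0 ≤ (bernsteinPolynomial ℝ n ν).eval x :=
  bernstein_nonneg (x := ⟨x, hx⟩)

theorem monotoneOn_eval_sum_bernsteinPolynomial_Icc (n a : ℕ) :
    MonotoneOn (fun x => (∑ ν ∈ Icc a n, bernsteinPolynomial ℝ n ν).eval x) (Set.Icc 0 1) := by
  rcases a with _ | a
  · simp only [← Nat.range_succ_eq_Icc_zero, bernsteinPolynomial.sum, eval_one]
    exact monotoneOn_const
  rcases n with _ | n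
  · simp only [Icc_eq_empty (by omega : ¬a + 1 ≤ 0), sum_empty, eval_zero]
    exact monotoneOn_const
  refine monotoneOn_of_deriv_nonneg (convex_Icc 0 1) (Polynomial.continuousOn _)
    (Polynomial.differentiable _).differentiableOn fun x hx => ?_
  rw [Polynomial.deriv, derivative_sum_bernsteinPolynomial_Icc, eval_mul, eval_add, eval_natCast,
    eval_one]
  exact mul_nonneg (by positivity)
    (eval_bernsteinPolynomial_nonneg (interior_subset hx))

theorem monotoneOn_binomial_upper_tail (n a : ℕ) :
    MonotoneOn (fun x : ℝ => ∑ j ∈ Icc a n, (n.choose j : ℝ) * x ^ j * (1 - x) ^ (n - j))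
      (Set.Icc 0 1) := by
  simpa [bernsteinPolynomial, eval_finsetSum] using
    monotoneOn_eval_sum_bernsteinPolynomial_Icc n a

theorem monotoneOn_one_sub_one_sub_pow (k : ℕ) :
    MonotoneOn (fun x : ℝ => 1 - (1 - x) ^ k) (Set.Iic 1) := fun x hx y _ hxy => by
  have : (1 - y) ^ k ≤ (1 - x) ^ k := pow_le_pow_left₀ (sub_nonneg.2 ‹y ≤ 1›) (by linarith) k
  dsimp only
  linarith

theorem mapsTo_one_sub_one_sub_pow (k : ℕ) :
    Set.MapsTo (fun x : ℝ => 1 - (1 - x) ^ k) (Set.Icc 0 1) (Set.Icc 0 1) := fun x hx => by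
  have h₀ : 0 ≤ (1 - x) ^ k := pow_nonneg (sub_nonneg.2 hx.2) k
  have h₁ : (1 - x) ^ k ≤ 1 := pow_le_one₀ (sub_nonneg.2 hx.2) (by linarith [hx.1])
  constructor <;> dsimp only <;> linarith

theorem div_sum_mem_Icc {ι : Type*} {s : Finset ι} {f : ι → ℝ} (hf : ∀ i ∈ s, 0 ≤ f i) {i : ι}
    (hi : i ∈ s) : f i / ∑ j ∈ s, f j ∈ Set.Icc 0 1 :=
  ⟨div_nonneg (hf i hi) (sum_nonneg hf),
    div_le_one_of_le₀ (single_le_sum hf hi) (sum_nonneg hf)⟩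

theorem fediac_inclusion_probability_antitone_general
    (d k N a : ℕ)
    (α : ℝ) (hα : α < 0)
    (p q r : ℕ → ℝ)
    (hp : ∀ l ∈ Finset.Icc 1 d, p l = (l : ℝ) ^ α / ∑ j ∈ Finset.Icc 1 d, (j : ℝ) ^ α)
    (hq : ∀ l ∈ Finset.Icc 1 d, q l = 1 - (1 - p l) ^ k)
    (hr : ∀ l ∈ Finset.Icc 1 d,
      r l = ∑ j ∈ Finset.Icc a N, (N.choose j : ℝ) * (q l) ^ j * (1 - q l) ^ (N - j)) :
    ∀ l l' : ℕ, 1 ≤ l → l ≤ l' → l' ≤ d → r l' ≤ r l := by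
  intro l l' hl hll' hl'd
  have hl_mem : l ∈ Icc 1 d := mem_Icc.2 ⟨hl, hll'.trans hl'd⟩
  have hl'_mem : l' ∈ Icc 1 d := mem_Icc.2 ⟨hl.trans hll', hl'd⟩
  have hweight_nonneg : ∀ j : ℕ, 0 ≤ (j : ℝ) ^ α := fun j => Real.rpow_nonneg j.cast_nonneg α
  have hp_mem : ∀ m ∈ Icc 1 d, p m ∈ Set.Icc 0 1 := fun m hm => by
    rw [hp m hm]
    exact div_sum_mem_Icc (fun j _ => hweight_nonneg j) hm
  have hq_mem : ∀ m ∈ Icc 1 d, q m ∈ Set.Icc 0 1 := fun m hm => by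
    rw [hq m hm]
    exact mapsTo_one_sub_one_sub_pow k (hp_mem m hm)
  have hp_le : p l' ≤ p l := by
    rw [hp l hl_mem, hp l' hl'_mem]
    exact div_le_div_of_nonneg_right
      (Real.rpow_le_rpow_of_nonpos (by exact_mod_cast hl) (by exact_mod_cast hll') hα.le)
      (sum_nonneg fun j _ => hweight_nonneg j)
  have hq_le : q l' ≤ q l := by
    rw [hq l hl_mem, hq l' hl'_mem]
    exact monotoneOn_one_sub_one_sub_pow k (hp_mem l' hl'_mem).2 (hp_mem l hl_mem).2 hp_le
  rw [hr l hl_mem, hr l' hl'_mem]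
  exact monotoneOn_binomial_upper_tail N a (hq_mem l' hl'_mem) (hq_mem l hl_mem) hq_le

/-- In FediAC's voting phase with vote probabilities `p l = l^α / Σ_{j=1}^d j^α` (power law,
`α < 0`), per-client vote probabilities `q l = 1 − (1 − p l)^k`, and inclusion probabilities
`r l = Σ_{j=a}^{N} C(N,j)·(q l)^j·(1 − q l)^{N−j}`, model updates of larger magnitude rank are
at least as likely to be included in the global index array: `r l ≥ r l'` for `1 ≤ l ≤ l' ≤ d`. -/
theorem fediac_inclusion_probability_antitone
    (d k N a : ℕ) (hd : 1 ≤ d) (hk : 1 ≤ k) (hN : 1 ≤ N) (ha1 : 1 ≤ a) (haN : a ≤ N)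
    (α : ℝ) (hα : α < 0)
    (p q r : ℕ → ℝ)
    (hp : ∀ l ∈ Finset.Icc 1 d, p l = (l : ℝ) ^ α / ∑ j ∈ Finset.Icc 1 d, (j : ℝ) ^ α)
    (hq : ∀ l ∈ Finset.Icc 1 d, q l = 1 - (1 - p l) ^ k)
    (hr : ∀ l ∈ Finset.Icc 1 d,
      r l = ∑ j ∈ Finset.Icc a N, (N.choose j : ℝ) * (q l) ^ j * (1 - q l) ^ (N - j)) :
    ∀ l l' : ℕ, 1 ≤ l → l ≤ l' → l' ≤ d → r l' ≤ r l :=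
  fediac_inclusion_probability_antitone_general d k N a α hα p q r hp hq hr
end
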